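/- arXiv:1710.00402 — 3 statements merged into one kernel-verified Lean document; each statement's English description precedes it below -/
import Mathlib

section
/- Let P be a simplicial poset, let w, y ∈ P, and let q be a positive integer. Then in the face ring A_P, the identity (wy)^q = (w ∧ y)^q · Σ_{z ∈ M(w,y)} z^q holds, where M(w,y) is the set of minimal upper bounds of w and y. In particular, if z₁ ≠ z₂ are distinct elements of M(w,y), then z₁ z₂ = 0 in A_P. -/
open scoped Classical
open MvPolynomial

noncomputable section

def IsSimplicialPoset (P : Type*) [Fintype P] [PartialOrder P] [OrderBot P] : Prop :=
  ∀ y : P, ∃ m : ℕ, Nonempty (Set.Icc (⊥ : P) y ≃o Finset (Fin m))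

def MUB {P : Type*} [PartialOrder P] (w y : P) : Set P :=
  {z | z ∈ upperBounds {w, y} ∧ ∀ z' ∈ upperBounds {w, y}, z' ≤ z → z' = z}

variable (P : Type) [Fintype P] [PartialOrder P] [OrderBot P]
variable (k : Type) [Field k]

/-- The defining ideal of the face ring of a simplicial poset. -/
def faceIdeal : Ideal (MvPolynomial P k) :=
  Ideal.span
    ({f | ∃ w y : P, upperBounds {w, y} = ∅ ∧ f = X w * X y} ∪
     {f | ∃ w y m : P, (upperBounds {w, y}).Nonempty ∧ IsGLB {w, y} m ∧
        f = X w * X y - X m * ∑ z ∈ (Set.toFinite (MUB w y)).toFinset, X z} ∪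
     {X (⊥ : P) - 1})

/-- The face ring `A_P = k[P]/I_P` of a simplicial poset. -/
abbrev FaceRing := MvPolynomial P k ⧸ faceIdeal P k

/-- The class of the variable corresponding to a face `y` in the face ring. -/
def fv (y : P) : FaceRing P k := Ideal.Quotient.mk _ (X y)

/-- `r` is a standard monomial with leading variable `z`: a product of powers of
variables along a strictly decreasing chain starting at `z`, with positive exponents. -/
def IsStdMonLead (r : FaceRing P k) (z : P) : Prop :=
  ∃ (c : ℕ) (w : Fin (c + 1) → P) (p : Fin (c + 1) → ℕ),
    StrictAnti w ∧ (∀ i, 0 < p i) ∧ w 0 = z ∧ r = ∏ i, (fv P k (w i)) ^ (p i)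

/-! `(wy)^q = (w ∧ y)^q · Σ z^q` reduces to the defining relation `wy = (w ∧ y) · Σ z` and the
vanishing of `z₁ z₂` for distinct minimal upper bounds: a sum of pairwise orthogonal elements has
no cross terms in its powers. The vanishing holds because a common upper bound `u` of `z₁, z₂`
would make the Boolean lattice `[0̂, u]` supply a meet of `z₁, z₂`, an upper bound of `w, y` below
both, contradicting minimality. -/

theorem add_pow_succ_of_mul_eq_zero {R : Type*} [CommSemiring R] {a b : R} (h : a * b = 0)
    (n : ℕ) : (a + b) ^ (n + 1) = a ^ (n + 1) + b ^ (n + 1) := by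
  induction n with
  | zero => simp
  | succ n ih =>
    calc (a + b) ^ (n + 1 + 1) = (a ^ (n + 1) + b ^ (n + 1)) * (a + b) := by rw [pow_succ, ih]
      _ = a ^ (n + 1 + 1) + b ^ (n + 1 + 1) + (a ^ n + b ^ n) * (a * b) := by ring
      _ = a ^ (n + 1 + 1) + b ^ (n + 1 + 1) := by rw [h, mul_zero, add_zero]

theorem Finset.sum_pow_of_pairwise_mul_eq_zero {R ι : Type*} [CommSemiring R] {s : Finset ι}
    {f : ι → R} (hf : (s : Set ι).Pairwise fun i j ↦ f i * f j = 0) {q : ℕ} (hq : q ≠ 0) :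
    (∑ i ∈ s, f i) ^ q = ∑ i ∈ s, f i ^ q := by
  obtain ⟨n, rfl⟩ := Nat.exists_eq_succ_of_ne_zero hq
  induction s using Finset.cons_induction with
  | empty => simp
  | cons a s ha ih =>
    have hsum : f a * ∑ i ∈ s, f i = 0 :=
      Finset.mul_sum s f (f a) ▸ Finset.sum_eq_zero fun i hi ↦
        hf (by simp) (by simp [hi]) fun hai ↦ ha (hai ▸ hi)
    rw [Finset.sum_cons, Finset.sum_cons, add_pow_succ_of_mul_eq_zero hsum,
      ih (hf.mono fun i hi ↦ by simp [hi])]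

theorem eq_of_mem_MUB_of_isGLB {α : Type*} [PartialOrder α] {w y z₁ z₂ c : α}
    (h₁ : z₁ ∈ MUB w y) (h₂ : z₂ ∈ MUB w y) (hc : IsGLB {z₁, z₂} c) : z₁ = z₂ := by
  have hw : w ∈ lowerBounds {z₁, z₂} := by
    rw [lowerBounds_insert, lowerBounds_singleton]
    exact ⟨h₁.1 (Set.mem_insert _ _), h₂.1 (Set.mem_insert _ _)⟩
  have hy : y ∈ lowerBounds {z₁, z₂} := by
    rw [lowerBounds_insert, lowerBounds_singleton]
    exact ⟨h₁.1 (Set.mem_insert_of_mem _ rfl), h₂.1 (Set.mem_insert_of_mem _ rfl)⟩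
  have hc_ub : c ∈ upperBounds {w, y} := by
    rw [upperBounds_insert, upperBounds_singleton]
    exact ⟨hc.2 hw, hc.2 hy⟩
  have hc₁ : c = z₁ := h₁.2 c hc_ub (hc.1 (Set.mem_insert _ _))
  have hc₂ : c = z₂ := h₂.2 c hc_ub (hc.1 (Set.mem_insert_of_mem _ rfl))
  exact hc₁.symm.trans hc₂

theorem exists_isGLB_pair_of_orderIso_Icc {α β : Type*} [PartialOrder α] [OrderBot α]
    [SemilatticeInf β] {u a b : α} (e : Set.Icc (⊥ : α) u ≃o β) (ha : a ≤ u) (hb : b ≤ u) :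
    ∃ c, IsGLB {a, b} c := by
  set a' : Set.Icc (⊥ : α) u := ⟨a, bot_le, ha⟩
  set b' : Set.Icc (⊥ : α) u := ⟨b, bot_le, hb⟩
  refine ⟨e.symm (e a' ⊓ e b'), ?_, ?_⟩
  · rw [lowerBounds_insert, lowerBounds_singleton]
    exact ⟨e.symm_apply_le.2 inf_le_left, e.symm_apply_le.2 inf_le_right⟩
  · intro d hd
    rw [lowerBounds_insert, lowerBounds_singleton] at hd
    let d' : Set.Icc (⊥ : α) u := ⟨d, bot_le, hd.1.trans ha⟩
    show d' ≤ _
    exact e.le_symm_apply.2 (le_inf (e.monotone hd.1) (e.monotone hd.2))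

theorem IsSimplicialPoset.upperBounds_eq_empty_of_mem_MUB {P : Type*} [Fintype P]
    [PartialOrder P] [OrderBot P] (hP : IsSimplicialPoset P) {w y z₁ z₂ : P}
    (h₁ : z₁ ∈ MUB w y) (h₂ : z₂ ∈ MUB w y) (hne : z₁ ≠ z₂) :
    upperBounds {z₁, z₂} = ∅ := by
  refine Set.eq_empty_of_forall_notMem fun u hu ↦ hne ?_
  obtain ⟨_, ⟨e⟩⟩ := hP u
  obtain ⟨c, hc⟩ := exists_isGLB_pair_of_orderIso_Icc e (hu (Set.mem_insert _ _))
    (hu (Set.mem_insert_of_mem _ rfl))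
  exact eq_of_mem_MUB_of_isGLB h₁ h₂ hc

section

variable {P k}

theorem fv_mul_fv_eq_zero {w y : P} (h : upperBounds {w, y} = ∅) : fv P k w * fv P k y = 0 :=
  (map_mul _ _ _).symm.trans <| Ideal.Quotient.eq_zero_iff_mem.2 <|
    Ideal.subset_span (Or.inl (Or.inl ⟨w, y, h, rfl⟩))

theorem fv_mul_fv_eq_mul_sum {w y m : P} (hub : (upperBounds {w, y}).Nonempty)
    (hm : IsGLB {w, y} m) :
    fv P k w * fv P k y = fv P k m * ∑ z ∈ (Set.toFinite (MUB w y)).toFinset, fv P k z := by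
  simp only [fv, ← map_mul, ← map_sum]
  exact Ideal.Quotient.eq.2 (Ideal.subset_span (Or.inl (Or.inr ⟨w, y, m, hub, hm, rfl⟩)))

end

/-- Lemma 2.4 ("freshman's dream"): in the face ring of a simplicial poset,
`(wy)^q = (w ∧ y)^q · Σ_{z ∈ M(w,y)} z^q`; in particular distinct minimal upper bounds
multiply to zero. -/
theorem faceRing_pow_identity
    (hP : IsSimplicialPoset P) (w y m : P)
    (hub : (upperBounds {w, y}).Nonempty) (hm : IsGLB {w, y} m) (q : ℕ) (hq : 0 < q) :
    ((fv P k w * fv P k y) ^ q =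
      (fv P k m) ^ q * ∑ z ∈ (Set.toFinite (MUB w y)).toFinset, (fv P k z) ^ q) ∧
    (∀ z₁ z₂ : P, z₁ ∈ MUB w y → z₂ ∈ MUB w y → z₁ ≠ z₂ →
      fv P k z₁ * fv P k z₂ = 0) := by
  have hzero : ∀ z₁ z₂ : P, z₁ ∈ MUB w y → z₂ ∈ MUB w y → z₁ ≠ z₂ →
      fv P k z₁ * fv P k z₂ = 0 := fun z₁ z₂ h₁ h₂ hne ↦
    fv_mul_fv_eq_zero (hP.upperBounds_eq_empty_of_mem_MUB h₁ h₂ hne)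
  refine ⟨?_, hzero⟩
  rw [fv_mul_fv_eq_mul_sum hub hm, mul_pow, Finset.sum_pow_of_pairwise_mul_eq_zero _ hq.ne']
  intro z₁ h₁ z₂ h₂ hne
  simp only [Finset.mem_coe, Set.Finite.mem_toFinset] at h₁ h₂
  exact hzero z₁ z₂ h₁ h₂ hne

end
end

section
/- Let P be a simplicial poset and let m = ∏_{i=1}^k y_i^{p_i} be a standard monomial in the face ring A_P with y₁ ≻ y₂ ≻ ⋯ ≻ y_k, and let ℓ be a positive integer and x_j an atom of P. Then x_j^ℓ · m can be written in A_P as a sum Σ_{z ∈ M(x_j, y₁)} m_z, where each m_z is a standard monomial whose leading variable is z. In particular, if x_j and y₁ have no common upper bound, then x_j^ℓ · m = 0. -/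
open scoped Classical
open MvPolynomial

noncomputable section

variable (P : Type) [Fintype P] [PartialOrder P] [OrderBot P]
variable (k : Type) [Field k]

/-! Write a standard monomial with leading face `y` as `y^a * t`, where `t` is `1` or a standard
monomial in faces strictly below `y`, and induct on `y`. If the atom `x` is not below `y`, then
`x ∧ y = ⊥`, so the straightening relation reads `x * y = Σ_{z ∈ M(x, y)} z`, and each
`z * y^(a-1) * t` is standard because `y < z`. If `x ≤ y`, then `M(x, y) = {y}`; expand `x * t` by
induction over `M(x, w)`, `w` the leading face of `t`. Since `[⊥, y]` is Boolean, exactly one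
`z ∈ M(x, w)` lies below `y`, and every other one has no common upper bound with `y`, so `y^a`
annihilates its term. Higher powers of `x` are absorbed the same way, since `x` lies below every
`z ∈ M(x, y)`. -/

section MinimalUpperBounds

variable {α : Type*} [PartialOrder α] {x y : α}

lemma mem_upperBounds_pair {z : α} : z ∈ upperBounds ({x, y} : Set α) ↔ x ≤ z ∧ y ≤ z := by
  simp [upperBounds_insert]

lemma MUB_of_le (h : x ≤ y) : MUB x y = {y} := by
  ext z
  simp only [MUB, mem_upperBounds_pair, Set.mem_singleton_iff]
  refine ⟨fun ⟨⟨_, hyz⟩, hmin⟩ => (hmin y ⟨h, le_rfl⟩ hyz).symm, ?_⟩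
  rintro rfl
  exact ⟨⟨h, le_rfl⟩, fun z' hz' hz'z => hz'z.antisymm hz'.2⟩

lemma toFinset_MUB_of_le [Finite α] (h : x ≤ y) : (Set.toFinite (MUB x y)).toFinset = {y} := by
  ext
  simp [MUB_of_le h]

lemma MUB_eq_empty (h : upperBounds ({x, y} : Set α) = ∅) : MUB x y = ∅ :=
  Set.eq_empty_of_forall_notMem fun _ hz => by simpa [h] using hz.1

lemma isGLB_pair_bot_of_isAtom [OrderBot α] (hx : IsAtom x) (h : ¬ x ≤ y) :
    IsGLB ({x, y} : Set α) ⊥ := by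
  refine ⟨fun _ _ => bot_le, fun b hb => ?_⟩
  rcases hx.le_iff.1 (hb (Set.mem_insert x _)) with rfl | rfl
  · exact le_rfl
  · exact absurd (hb (Set.mem_insert_of_mem _ rfl)) h

end MinimalUpperBounds

section Simplicial

variable {α : Type*} [Fintype α] [PartialOrder α] [OrderBot α]

/-- The interval `[⊥, u]` is a Boolean lattice, so `x` and `y` have a join there. -/
lemma IsSimplicialPoset.exists_isLeast_upperBounds_inter_Iic (hP : IsSimplicialPoset α)
    {x y u : α} (hx : x ≤ u) (hy : y ≤ u) :
    ∃ z, IsLeast (upperBounds {x, y} ∩ Set.Iic u) z := by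
  obtain ⟨m, ⟨φ⟩⟩ := hP u
  let x' : Set.Icc ⊥ u := ⟨x, bot_le, hx⟩
  let y' : Set.Icc ⊥ u := ⟨y, bot_le, hy⟩
  let z := φ.symm (φ x' ∪ φ y')
  have hxz : x' ≤ z := φ.le_symm_apply.2 Finset.subset_union_left
  have hyz : y' ≤ z := φ.le_symm_apply.2 Finset.subset_union_right
  refine ⟨z, ⟨mem_upperBounds_pair.2 ⟨hxz, hyz⟩, z.2.2⟩, ?_⟩
  rintro w ⟨hw, hwu⟩
  obtain ⟨hxw, hyw⟩ := mem_upperBounds_pair.1 hw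
  exact (φ.symm_apply_le (x := ⟨w, bot_le, hwu⟩)).2
    (Finset.union_subset (φ.monotone hxw) (φ.monotone hyw))

lemma IsSimplicialPoset.existsUnique_mem_MUB_le (hP : IsSimplicialPoset α)
    {x y u : α} (hx : x ≤ u) (hy : y ≤ u) : ∃! z, z ∈ MUB x y ∧ z ≤ u := by
  obtain ⟨z, ⟨hz, hzu⟩, hleast⟩ := hP.exists_isLeast_upperBounds_inter_Iic hx hy
  refine ⟨z, ⟨⟨hz, fun z' hz' hz'z => hz'z.antisymm (hleast ⟨hz', hz'z.trans hzu⟩)⟩, hzu⟩, ?_⟩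
  rintro b ⟨hb, hbu⟩
  exact (hb.2 z hz (hleast ⟨hb.1, hbu⟩)).symm

end Simplicial

section FaceRing

variable {P k}

lemma fv_bot : fv P k ⊥ = 1 := by
  rw [fv, ← sub_eq_zero, ← map_one (Ideal.Quotient.mk _), ← map_sub,
    Ideal.Quotient.eq_zero_iff_mem]
  exact Ideal.subset_span (Or.inr rfl)

lemma fv_mul_fv_of_upperBounds_eq_empty {w y : P} (h : upperBounds ({w, y} : Set P) = ∅) :
    fv P k w * fv P k y = 0 := by
  rw [fv, fv, ← map_mul, Ideal.Quotient.eq_zero_iff_mem]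
  exact Ideal.subset_span (Or.inl (Or.inl ⟨w, y, h, rfl⟩))

lemma fv_mul_fv_of_isGLB {w y m : P} (h : (upperBounds ({w, y} : Set P)).Nonempty)
    (hm : IsGLB ({w, y} : Set P) m) :
    fv P k w * fv P k y = fv P k m * ∑ z ∈ (Set.toFinite (MUB w y)).toFinset, fv P k z := by
  rw [← sub_eq_zero]
  simp only [fv, ← map_mul, ← map_sum, ← map_sub]
  rw [Ideal.Quotient.eq_zero_iff_mem]
  exact Ideal.subset_span (Or.inl (Or.inr ⟨w, y, m, h, hm, rfl⟩))

lemma fv_mul_fv_of_isAtom {x y : P} (hx : IsAtom x) (h : ¬ x ≤ y) :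
    fv P k x * fv P k y = ∑ z ∈ (Set.toFinite (MUB x y)).toFinset, fv P k z := by
  rcases (upperBounds ({x, y} : Set P)).eq_empty_or_nonempty with hub | hub
  · rw [fv_mul_fv_of_upperBounds_eq_empty hub,
      Set.Finite.toFinset_eq_empty.2 (MUB_eq_empty hub), Finset.sum_empty]
  · rw [fv_mul_fv_of_isGLB hub (isGLB_pair_bot_of_isAtom hx h), fv_bot, one_mul]

end FaceRing

section StandardMonomials

def IsStdMonBelow (t : FaceRing P k) (y : P) : Prop :=
  t = 1 ∨ ∃ w < y, IsStdMonLead P k t w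

variable {P k} {r t : FaceRing P k} {w y z : P} {a : ℕ}

lemma isStdMonLead_iff :
    IsStdMonLead P k r y ↔ ∃ a, 0 < a ∧ ∃ t, IsStdMonBelow P k t y ∧ r = fv P k y ^ a * t := by
  constructor
  · rintro ⟨c, w, q, hw, hq, rfl, rfl⟩
    refine ⟨q 0, hq 0, ∏ i : Fin c, fv P k (w i.succ) ^ q i.succ, ?_, Fin.prod_univ_succ _⟩
    cases c with
    | zero => exact Or.inl (Fin.prod_univ_zero _)
    | succ c =>
      exact Or.inr ⟨w 1, hw (Fin.succ_pos 0), c, fun i => w i.succ, fun i => q i.succ,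
        hw.comp_strictMono Fin.strictMono_succ, fun i => hq _, rfl, rfl⟩
  · rintro ⟨a, ha, t, rfl | ⟨w, hwy, c, w', q, hw', hq, rfl, rfl⟩, rfl⟩
    · exact ⟨0, fun _ => y, fun _ => a, Subsingleton.strictAnti (α := Fin 1) _, fun _ => ha, rfl, by simp⟩
    · exact ⟨c + 1, Matrix.vecCons y w', Matrix.vecCons a q, hw'.vecCons hwy,
        Fin.cases ha hq, rfl, by simp [Fin.prod_univ_succ]⟩

lemma IsStdMonBelow.mono (ht : IsStdMonBelow P k t y) (h : y ≤ z) : IsStdMonBelow P k t z :=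
  ht.imp_right fun ⟨w, hwy, hw⟩ => ⟨w, hwy.trans_le h, hw⟩

lemma isStdMonLead_fv_pow (ha : 0 < a) : IsStdMonLead P k (fv P k z ^ a) z :=
  isStdMonLead_iff.2 ⟨a, ha, 1, Or.inl rfl, (mul_one _).symm⟩

lemma IsStdMonLead.fv_pow_mul_of_le (hr : IsStdMonLead P k r w) (h : w ≤ z) (ha : 0 < a) :
    IsStdMonLead P k (fv P k z ^ a * r) z := by
  rcases h.eq_or_lt with rfl | h
  · obtain ⟨b, hb, t, ht, rfl⟩ := isStdMonLead_iff.1 hr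
    exact isStdMonLead_iff.2 ⟨a + b, by omega, t, ht, by ring⟩
  · exact isStdMonLead_iff.2 ⟨a, ha, r, Or.inr ⟨w, h, hr⟩, rfl⟩

lemma IsStdMonLead.exists_eq_fv_mul (hr : IsStdMonLead P k r y) :
    ∃ r', r = fv P k y * r' ∧ ∀ z, y < z → IsStdMonLead P k (fv P k z * r') z := by
  obtain ⟨a, ha, t, ht, rfl⟩ := isStdMonLead_iff.1 hr
  obtain ⟨b, rfl⟩ := Nat.exists_eq_add_one_of_ne_zero ha.ne'
  refine ⟨fv P k y ^ b * t, by ring, fun z hz => ?_⟩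
  have hbelow : IsStdMonBelow P k (fv P k y ^ b * t) z := by
    rcases b.eq_zero_or_pos with rfl | hb
    · simpa using ht.mono hz.le
    · exact Or.inr ⟨y, hz, isStdMonLead_iff.2 ⟨b, hb, t, ht, rfl⟩⟩
  simpa using isStdMonLead_iff.2 ⟨1, one_pos, _, hbelow, rfl⟩

lemma IsStdMonLead.fv_pow_mul_eq_zero {u : P} (hr : IsStdMonLead P k r w)
    (h : fv P k u * fv P k w = 0) (ha : 0 < a) : fv P k u ^ a * r = 0 := by
  obtain ⟨r', rfl, -⟩ := hr.exists_eq_fv_mul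
  obtain ⟨b, rfl⟩ := Nat.exists_eq_add_one_of_ne_zero ha.ne'
  calc fv P k u ^ (b + 1) * (fv P k w * r') = fv P k u ^ b * (fv P k u * fv P k w) * r' := by ring
    _ = 0 := by rw [h]; ring

end StandardMonomials

section AtomMul

variable {P k} {x y : P} {r : FaceRing P k}

lemma fv_pow_mul_sum_isStdMonLead (hP : IsSimplicialPoset P) {w : P} (hxy : x ≤ y) (hwy : w ≤ y)
    {a : ℕ} (ha : 0 < a) {g : P → FaceRing P k} (hg : ∀ z ∈ MUB x w, IsStdMonLead P k (g z) z) :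
    IsStdMonLead P k (fv P k y ^ a * ∑ z ∈ (Set.toFinite (MUB x w)).toFinset, g z) y := by
  obtain ⟨zs, ⟨hzs, hzsy⟩, -⟩ := hP.existsUnique_mem_MUB_le hxy hwy
  have hvanish : ∀ b ∈ MUB x w, b ≠ zs → fv P k y ^ a * g b = 0 := by
    intro b hb hne
    refine (hg b hb).fv_pow_mul_eq_zero (fv_mul_fv_of_upperBounds_eq_empty ?_) ha
    refine Set.eq_empty_of_forall_notMem fun u hu => hne ?_
    obtain ⟨hyu, hbu⟩ := mem_upperBounds_pair.1 hu
    exact (hP.existsUnique_mem_MUB_le (hxy.trans hyu) (hwy.trans hyu)).unique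
      ⟨hb, hbu⟩ ⟨hzs, hzsy.trans hyu⟩
  rw [Finset.mul_sum, Finset.sum_eq_single_of_mem zs (by simpa using hzs)
    fun b hb hne => hvanish b (by simpa using hb) hne]
  exact (hg zs hzs).fv_pow_mul_of_le hzsy ha

theorem IsStdMonLead.exists_fv_atom_mul_eq_sum (hP : IsSimplicialPoset P) (hx : IsAtom x)
    (hr : IsStdMonLead P k r y) :
    ∃ g : P → FaceRing P k, fv P k x * r = ∑ z ∈ (Set.toFinite (MUB x y)).toFinset, g z ∧
      ∀ z ∈ MUB x y, IsStdMonLead P k (g z) z := by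
  induction y using WellFoundedLT.induction generalizing r with
  | _ y ih =>
    by_cases hxy : x ≤ y
    · refine ⟨fun _ => fv P k x * r, by rw [toFinset_MUB_of_le hxy, Finset.sum_singleton], ?_⟩
      intro z hz
      obtain rfl : z = y := by simpa [MUB_of_le hxy] using hz
      obtain ⟨a, ha, t, rfl | ⟨w, hwz, ht⟩, rfl⟩ := isStdMonLead_iff.1 hr
      · rw [mul_one, mul_comm, ← pow_one (fv P k x)]
        exact (isStdMonLead_fv_pow one_pos).fv_pow_mul_of_le hxy ha
      · obtain ⟨g, hg, hgstd⟩ := ih w hwz ht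
        rw [mul_left_comm, hg]
        exact fv_pow_mul_sum_isStdMonLead hP hxy hwz.le ha hgstd
    · obtain ⟨r', rfl, hr'⟩ := hr.exists_eq_fv_mul
      refine ⟨fun z => fv P k z * r', ?_, fun z hz => hr' z ?_⟩
      · rw [← mul_assoc, fv_mul_fv_of_isAtom hx hxy, Finset.sum_mul]
      · obtain ⟨hxz, hyz⟩ := mem_upperBounds_pair.1 hz.1
        exact hyz.lt_of_ne (by rintro rfl; exact hxy hxz)

lemma IsStdMonLead.fv_atom_pow_mul_of_le (hP : IsSimplicialPoset P) (hx : IsAtom x)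
    (hr : IsStdMonLead P k r y) (hxy : x ≤ y) (n : ℕ) :
    IsStdMonLead P k (fv P k x ^ n * r) y := by
  induction n with
  | zero => simpa using hr
  | succ n ih =>
    obtain ⟨g, hg, hgstd⟩ := ih.exists_fv_atom_mul_eq_sum hP hx
    rw [pow_succ', mul_assoc, hg, toFinset_MUB_of_le hxy, Finset.sum_singleton]
    exact hgstd y (by simp [MUB_of_le hxy])

end AtomMul

/-- Lemma 2.5: multiplying a standard monomial `m = ∏ y_i^{p_i}` (with
`y_0 ≻ y_1 ≻ ⋯`) by a power `x_j^ℓ` of an atom yields a sum of standard monomials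
`Σ_{z ∈ M(x_j, y_0)} m_z` with leading variables the minimal upper bounds of `x_j`
and the leading variable `y_0`; in particular the product vanishes when `x_j` and `y_0`
have no common upper bound. -/
theorem atom_pow_mul_standard_monomial
    (hP : IsSimplicialPoset P) (xj : P) (hxj : IsAtom xj) (ℓ : ℕ) (hℓ : 0 < ℓ)
    (c : ℕ) (y : Fin (c + 1) → P) (p : Fin (c + 1) → ℕ)
    (hy : StrictAnti y) (hp : ∀ i, 0 < p i) :
    (∃ g : P → FaceRing P k,
      (fv P k xj) ^ ℓ * ∏ i, (fv P k (y i)) ^ (p i) =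
        ∑ z ∈ (Set.toFinite (MUB xj (y 0))).toFinset, g z ∧
      ∀ z ∈ MUB xj (y 0), IsStdMonLead P k (g z) z) ∧
    (upperBounds {xj, y 0} = ∅ →
      (fv P k xj) ^ ℓ * ∏ i, (fv P k (y i)) ^ (p i) = 0) := by
  obtain ⟨n, rfl⟩ := Nat.exists_eq_add_one_of_ne_zero hℓ.ne'
  have hm : IsStdMonLead P k (∏ i, fv P k (y i) ^ p i) (y 0) := ⟨c, y, p, hy, hp, rfl, rfl⟩
  obtain ⟨g, hg, hgstd⟩ := hm.exists_fv_atom_mul_eq_sum hP hxj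
  have hsum : fv P k xj ^ (n + 1) * ∏ i, fv P k (y i) ^ p i =
      ∑ z ∈ (Set.toFinite (MUB xj (y 0))).toFinset, fv P k xj ^ n * g z := by
    rw [pow_succ, mul_assoc, hg, Finset.mul_sum]
  refine ⟨⟨_, hsum, fun z hz => ?_⟩, fun hub => ?_⟩
  · exact (hgstd z hz).fv_atom_pow_mul_of_le hP hxj (mem_upperBounds_pair.1 hz.1).1 n
  · rw [hsum, Set.Finite.toFinset_eq_empty.2 (MUB_eq_empty hub), Finset.sum_empty]

end
end

section
/- Let P be a simplicial poset with atoms x₁, ..., xₙ, and let δ = (δ₁, ..., δₙ) ∈ ℤ_{≥0}ⁿ be a vector whose support {i : δᵢ > 0} equals supp(y) for some y ∈ P. Then there exists a standard monomial m in the face ring A_P with leading variable y and ℤⁿ-degree exactly δ. Explicitly, setting p₀ = min{δᵢ : δᵢ > 0}, and iteratively p_j = min{δᵢ : δᵢ > p_{j-1}} with S_j = {i : δᵢ ≥ p_j}, the monomial m = y^{p₀} ∏_{j=1}^ℓ y_{S_j}^{p_j − p_{j-1}} (where y_S denotes the unique face below y with support S) is standard of degree δ. -/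
open scoped Classical
open MvPolynomial

noncomputable section

variable (P : Type) [Fintype P] [PartialOrder P] [OrderBot P]
variable (k : Type) [Field k]

/-! Let `q` be the least nonzero entry of `δ`. Since `[⊥, y]` is a Boolean lattice, there is a face
`y' < y` whose atoms are exactly the `x i` with `q < δ i`. A standard monomial of degree `δ - q`
led by `y'`, obtained by well-founded recursion on the face, becomes one of degree `δ` led by `y`
after multiplying by `y ^ q`. Unwinding the recursion gives the monomial
`y ^ p₀ * ∏ j, y_{S_j} ^ (p_j - p_{j-1})`. -/

section

variable {α ι : Type*}

/-- The chain `w` with exponents `p` stands for the standard monomial `∏ a, w a ^ p a`, whose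
ℤⁿ-degree at the atom `x i` is the displayed sum. -/
def HasStdMonOfDegree [Preorder α] (x : ι → α) (y : α) (δ : ι → ℕ) : Prop :=
  ∃ (c : ℕ) (w : Fin (c + 1) → α) (p : Fin (c + 1) → ℕ),
    StrictAnti w ∧ (∀ a, 0 < p a) ∧ w 0 = y ∧ ∀ i, (∑ a, if x i ≤ w a then p a else 0) = δ i

namespace HasStdMonOfDegree

variable [Preorder α] {x : ι → α} {y y' : α} {δ δ' : ι → ℕ} {q : ℕ}

theorem single (hq : 0 < q) (hδ : ∀ i, (if x i ≤ y then q else 0) = δ i) :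
    HasStdMonOfDegree x y δ :=
  ⟨0, ![y], ![q], Subsingleton.strictAnti (α := Fin 1) _, Fin.forall_fin_one.2 hq, rfl,
    fun i => by simp [← hδ i]⟩

theorem cons (h : HasStdMonOfDegree x y' δ') (hy' : y' < y) (hq : 0 < q)
    (hδ : ∀ i, (if x i ≤ y then q else 0) + δ' i = δ i) : HasStdMonOfDegree x y δ := by
  obtain ⟨c, w, p, hw, hp, hw0, hdeg⟩ := h
  refine ⟨c + 1, Matrix.vecCons y w, Matrix.vecCons q p, hw.vecCons (hw0 ▸ hy'),
    Fin.cases hq hp, rfl, fun i => ?_⟩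
  exact (Fin.sum_univ_succ _).trans ((congrArg _ (hdeg i)).trans (hδ i))

end HasStdMonOfDegree

theorem OrderIso.exists_apply_eq_singleton_of_isAtom [PartialOrder α] [OrderBot α] {y a : α}
    (ψ : Set.Icc (⊥ : α) y ≃o Finset ι) (ha : IsAtom a) (hay : a ≤ y) :
    ∃ u, ψ ⟨a, bot_le, hay⟩ = {u} :=
  Finset.isAtom_iff.1 <|
    (((OrderIso.setCongr (Set.Iic y) _ (Set.ext fun _ => by simp)).trans ψ).isAtom_iff _).2
      (ha.Iic hay)

namespace IsSimplicialPoset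

variable [Fintype α] [PartialOrder α] [OrderBot α] {x : ι → α}

theorem exists_le_forall_le_iff (hP : IsSimplicialPoset α) (hinj : Function.Injective x)
    (hatom : ∀ i, IsAtom (x i)) (y : α) (T : ι → Prop) (hT : ∀ i, T i → x i ≤ y) :
    ∃ z ≤ y, ∀ i, x i ≤ z ↔ T i := by
  obtain ⟨m, ⟨ψ⟩⟩ := hP y
  let z := ψ.symm (Finset.univ.filter fun u => ∃ j, T j ∧ (ψ.symm {u} : α) = x j)
  refine ⟨z, z.2.2, fun i => ?_⟩
  by_cases hiy : x i ≤ y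
  · obtain ⟨u, hu⟩ := ψ.exists_apply_eq_singleton_of_isAtom (hatom i) hiy
    have hxi : (ψ.symm {u} : α) = x i := by rw [← hu, ψ.symm_apply_apply]
    calc x i ≤ z ↔ (⟨x i, bot_le, hiy⟩ : Set.Icc ⊥ y) ≤ z := Iff.rfl
      _ ↔ ψ ⟨x i, bot_le, hiy⟩ ≤ ψ z := ψ.le_iff_le.symm
      _ ↔ T i := by simp [hu, z, hxi, hinj.eq_iff]
  · exact iff_of_false (fun h => hiy (h.trans z.2.2)) (fun h => hiy (hT i h))

theorem hasStdMonOfDegree (hP : IsSimplicialPoset α) (hinj : Function.Injective x)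
    (hatom : ∀ i, IsAtom (x i)) (y : α) (δ : ι → ℕ) (hδ : ∀ i, 0 < δ i ↔ x i ≤ y)
    (hpos : ∃ i, 0 < δ i) : HasStdMonOfDegree x y δ := by
  induction y using WellFoundedLT.induction generalizing δ with
  | _ y ih =>
  obtain ⟨i₀, hq, hmin⟩ := exists_minimalFor_of_wellFoundedLT (fun i => 0 < δ i) δ hpos
  set q := δ i₀
  have hq_le : ∀ i, x i ≤ y → q ≤ δ i := fun i hi =>
    (le_total q (δ i)).elim id (hmin ((hδ i).2 hi))
  have hδ_zero : ∀ i, ¬x i ≤ y → δ i = 0 := fun i hi => by have := (hδ i).not.2 hi; omega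
  by_cases hrest : ∃ i, q < δ i
  · obtain ⟨y', hy'y, hy'⟩ := hP.exists_le_forall_le_iff hinj hatom y (fun i => q < δ i)
      fun i h => (hδ i).1 (by omega)
    have hlt : y' < y := lt_of_le_of_ne hy'y fun h => by
      have := (hy' i₀).1 (h ▸ (hδ i₀).1 hq)
      omega
    refine (ih y' hlt (fun i => δ i - q) (fun i => by rw [hy' i]; omega)
      (hrest.imp fun i _ => by omega)).cons hlt hq fun i => ?_
    split_ifs with hi
    · have := hq_le i hi; omega
    · have := hδ_zero i hi; omega
  · refine .single hq fun i => ?_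
    split_ifs with hi
    · have := hq_le i hi; have := not_lt.1 fun h => hrest ⟨i, h⟩; omega
    · exact (hδ_zero i hi).symm

end IsSimplicialPoset

end

theorem exists_standard_monomial_of_degree
    (hP : IsSimplicialPoset P) (n : ℕ) (x : Fin n → P)
    (hinj : Function.Injective x) (hatom : ∀ i, IsAtom (x i))
    (y : P) (δ : Fin n → ℕ) (hδ : ∀ i, 0 < δ i ↔ x i ≤ y) :
    ∃ (c : ℕ) (w : Fin (c + 1) → P) (p : Fin (c + 1) → ℕ),
      StrictAnti w ∧ (∀ i, 0 < p i) ∧ w 0 = y ∧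
      (IsStdMonLead P k (∏ i, (fv P k (w i)) ^ (p i)) y) ∧
      ∀ i : Fin n, (∑ a, if x i ≤ w a then p a else 0) = δ i := by
  obtain ⟨c, w, p, hw, hp, hw0, hdeg⟩ : HasStdMonOfDegree x y δ := by
    by_cases hpos : ∃ i, 0 < δ i
    · exact hP.hasStdMonOfDegree hinj hatom y δ hδ hpos
    · refine .single one_pos fun i => ?_
      rw [if_neg ((hδ i).not.1 (not_exists.1 hpos i))]
      exact (Nat.eq_zero_of_not_pos (not_exists.1 hpos i)).symm
  exact ⟨c, w, p, hw, hp, hw0, ⟨c, w, p, hw, hp, hw0, rfl⟩, hdeg⟩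

end
end
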